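/- arXiv:math/0607230 — 5 statements merged into one kernel-verified Lean document; each statement's English description precedes it below -/
import Mathlib

section
/- The inverse error function satisfies the integro-differential equation I'(z)·∫₀^z I(t)dt = -1/2 + (1/√π)·I'(z) for all z ∈ (-1,1). -/
open Real Set

noncomputable def erf (z : ℝ) : ℝ := (2 / Real.sqrt π) * ∫ t in (0:ℝ)..z, Real.exp (-t^2)

lemma sqrt_pi_pos' : 0 < Real.sqrt π := Real.sqrt_pos.2 Real.pi_pos

lemma erf_hasDerivAt (x : ℝ) :
    HasDerivAt erf ((2 / Real.sqrt π) * Real.exp (-x^2)) x := by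
  have hc : Continuous fun t : ℝ => Real.exp (-t^2) := by continuity
  exact ((hc.integral_hasStrictDerivAt 0 x).hasDerivAt).const_mul _

lemma erf_strictMono : StrictMono erf := by
  apply strictMono_of_deriv_pos
  intro x
  rw [(erf_hasDerivAt x).deriv]
  have := sqrt_pi_pos'
  positivity

lemma erf_zero : erf 0 = 0 := by simp [erf]

lemma erf_neg (x : ℝ) : erf (-x) = - erf x := by
  unfold erf
  have h : (∫ t in (0:ℝ)..x, Real.exp (-(-t)^2)) = ∫ t in (-x:ℝ)..(-(0:ℝ)), Real.exp (-t^2) :=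
    intervalIntegral.integral_comp_neg fun t => Real.exp (-t^2)
  simp only [neg_sq, neg_zero] at h
  rw [intervalIntegral.integral_symm 0 (-x)] at h
  rw [show (∫ t in (0:ℝ)..(-x), Real.exp (-t^2)) = -∫ t in (0:ℝ)..x, Real.exp (-t^2) by
    linarith]
  ring

lemma core_lt (x : ℝ) (hx : 0 ≤ x) :
    (∫ t in (0:ℝ)..x, Real.exp (-t^2)) < Real.sqrt π / 2 := by
  have hint : MeasureTheory.Integrable (fun t : ℝ => Real.exp (-t^2)) := by
    have := integrable_exp_neg_mul_sq (b := 1) one_pos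
    simpa using this
  have hgauss : (∫ t in Ioi (0:ℝ), Real.exp (-t^2)) = Real.sqrt π / 2 := by
    have := integral_gaussian_Ioi 1
    simpa using this
  have hsplit : (∫ t in Ioi (0:ℝ), Real.exp (-t^2)) =
      (∫ t in Ioc (0:ℝ) x, Real.exp (-t^2)) + ∫ t in Ioi x, Real.exp (-t^2) := by
    rw [← MeasureTheory.setIntegral_union (Set.Ioc_disjoint_Ioi le_rfl) measurableSet_Ioi
      hint.integrableOn hint.integrableOn, Set.Ioc_union_Ioi_eq_Ioi hx]
  have htail : 0 < ∫ t in Ioi x, Real.exp (-t^2) := by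
    rw [MeasureTheory.setIntegral_pos_iff_support_of_nonneg_ae
      (Filter.Eventually.of_forall fun t => (Real.exp_pos _).le) hint.integrableOn]
    have hsupp : Function.support (fun t : ℝ => Real.exp (-t^2)) = Set.univ := by
      ext t; simp [Function.support, (Real.exp_pos (-t^2)).ne']
    rw [hsupp, Set.univ_inter]
    simp [Real.volume_Ioi]
  have hval : (∫ t in (0:ℝ)..x, Real.exp (-t^2)) = ∫ t in Ioc (0:ℝ) x, Real.exp (-t^2) :=
    intervalIntegral.integral_of_le hx
  rw [hval]
  linarith [hsplit, hgauss]

lemma erf_mem (x : ℝ) : erf x ∈ Ioo (-1:ℝ) 1 := by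
  have hπ := sqrt_pi_pos'
  have key : ∀ y : ℝ, 0 ≤ y → erf y ∈ Ico (0:ℝ) 1 := by
    intro y hy
    constructor
    · have : 0 ≤ ∫ t in (0:ℝ)..y, Real.exp (-t^2) :=
        intervalIntegral.integral_nonneg hy fun t _ => (Real.exp_pos _).le
      unfold erf; positivity
    · have h := core_lt y hy
      have : erf y < (2 / Real.sqrt π) * (Real.sqrt π / 2) := by
        unfold erf
        apply mul_lt_mul_of_pos_left h
        positivity
      calc erf y < (2 / Real.sqrt π) * (Real.sqrt π / 2) := this
        _ = 1 := by field_simp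
  rcases le_total 0 x with hx | hx
  · obtain ⟨h0, h1⟩ := key x hx
    exact ⟨lt_of_lt_of_le (by norm_num) h0, h1⟩
  · obtain ⟨h0, h1⟩ := key (-x) (by linarith)
    rw [erf_neg] at h0 h1
    constructor <;> linarith

theorem inverf_integro_differential (I : ℝ → ℝ)
    (hleft : ∀ z ∈ Ioo (-1:ℝ) 1, erf (I z) = z)
    (hright : ∀ x : ℝ, I (erf x) = x) :
    ∀ z ∈ Ioo (-1:ℝ) 1,
      deriv I z * (∫ t in (0:ℝ)..z, I t) = -(1/2) + (1 / Real.sqrt π) * deriv I z := by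
  have hπ := sqrt_pi_pos'
  set S : Set ℝ := Ioo (-1:ℝ) 1 with hS
  -- the order isomorphism ℝ ≃o S given by erf
  have hmono : StrictMono (fun x : ℝ => (⟨erf x, erf_mem x⟩ : S)) := fun a b hab =>
    Subtype.mk_lt_mk.2 (erf_strictMono hab)
  have hsurj : Function.Surjective (fun x : ℝ => (⟨erf x, erf_mem x⟩ : S)) := fun p =>
    ⟨I p.1, Subtype.ext (hleft p.1 p.2)⟩
  set e : ℝ ≃o S := StrictMono.orderIsoOfSurjective _ hmono hsurj with he
  -- continuity of I on S
  have hIcont : ContinuousOn I S := by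
    rw [continuousOn_iff_continuous_restrict]
    have h1 : S.restrict I = ⇑e.symm := by
      funext p
      have h2 : e (e.symm p) = p := e.apply_symm_apply p
      have h3 : erf (e.symm p) = (p : ℝ) := congrArg Subtype.val h2
      show I (p : ℝ) = _
      rw [← h3, hright]
    rw [show S.domRestrict I = S.restrict I from rfl, h1]
    exact e.symm.continuous
  have hSopen : IsOpen S := isOpen_Ioo
  -- I 0 = 0
  have hI0 : I 0 = 0 := by
    have := hright 0
    rwa [erf_zero] at this
  -- derivative of I on S
  have hIderiv : ∀ y ∈ S, HasDerivAt I ((2 / Real.sqrt π) * Real.exp (-(I y)^2))⁻¹ y := by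
    intro y hy
    have hda : HasDerivAt erf ((2 / Real.sqrt π) * Real.exp (-(I y)^2)) (I y) :=
      erf_hasDerivAt (I y)
    have hd0 : (2 / Real.sqrt π) * Real.exp (-(I y)^2) ≠ 0 := by positivity
    have hev : ∀ᶠ w in nhds y, erf (I w) = w := by
      filter_upwards [hSopen.mem_nhds hy] with w hw using hleft w hw
    exact HasDerivAt.of_local_left_inverse (hIcont.continuousAt (hSopen.mem_nhds hy))
      hda hd0 hev
  -- F and G
  set F : ℝ → ℝ := fun y => ∫ t in (0:ℝ)..y, I t with hFdef
  set G : ℝ → ℝ := fun y => (1 / Real.sqrt π) * (1 - Real.exp (-(I y)^2)) with hGdef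
  have h0S : (0:ℝ) ∈ S := by constructor <;> norm_num
  have hF' : ∀ y ∈ S, HasDerivAt F (I y) y := by
    intro y hy
    have hsub : Set.uIcc (0:ℝ) y ⊆ S :=
      (Set.ordConnected_Ioo).uIcc_subset h0S hy
    have hint : IntervalIntegrable I MeasureTheory.volume 0 y :=
      (hIcont.mono hsub).intervalIntegrable
    exact intervalIntegral.integral_hasDerivAt_right hint
      (hIcont.stronglyMeasurableAtFilter hSopen y hy)
      (hIcont.continuousAt (hSopen.mem_nhds hy))
  have hG' : ∀ y ∈ S, HasDerivAt G (I y) y := by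
    intro y hy
    have hIy := hIderiv y hy
    have h1 : HasDerivAt (fun w => -(I w)^2)
        (-(2 * I y ^ 1 * ((2 / Real.sqrt π) * Real.exp (-(I y)^2))⁻¹)) y := by
      exact (hIy.pow 2).neg
    have h2 : HasDerivAt (fun w => Real.exp (-(I w)^2))
        (Real.exp (-(I y)^2) * -(2 * I y ^ 1 * ((2 / Real.sqrt π) * Real.exp (-(I y)^2))⁻¹)) y :=
      h1.exp
    have h3 : HasDerivAt G
        ((1 / Real.sqrt π) * (0 - Real.exp (-(I y)^2) *
          -(2 * I y ^ 1 * ((2 / Real.sqrt π) * Real.exp (-(I y)^2))⁻¹))) y :=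
      ((hasDerivAt_const y (1:ℝ)).sub h2).const_mul _
    convert h3 using 1
    have hexp : Real.exp (-(I y)^2) ≠ 0 := (Real.exp_pos _).ne'
    field_simp
    ring
  -- F = G on S
  have hFG : ∀ y ∈ S, F y = G y := by
    have hdiff : DifferentiableOn ℝ (fun y => F y - G y) S := fun y hy =>
      (((hF' y hy).sub (hG' y hy)).differentiableAt).differentiableWithinAt
    have hzero : ∀ y ∈ S, fderivWithin ℝ (fun y => F y - G y) S y = 0 := by
      intro y hy
      rw [fderivWithin_of_isOpen hSopen hy]
      have hd : HasDerivAt (fun y => F y - G y) 0 y := by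
        have h5 := (hF' y hy).sub (hG' y hy)
        rwa [sub_self] at h5
      have h4 : HasFDerivAt (fun y => F y - G y) (0 : ℝ →L[ℝ] ℝ) y := by
        have := hd.hasFDerivAt
        rwa [show (ContinuousLinearMap.toSpanSingleton ℝ (0:ℝ)) = 0 by
          ext; simp] at this
      exact h4.fderiv
    intro y hy
    have hconst := (convex_Ioo (-1:ℝ) 1).is_const_of_fderivWithin_eq_zero hdiff hzero hy h0S
    have hF0 : F 0 = 0 := by simp [hFdef]
    have hG0 : G 0 = 0 := by simp [hGdef, hI0]
    have : F y - G y = F 0 - G 0 := hconst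
    rw [hF0, hG0] at this
    linarith
  -- conclude
  intro z hz
  have hdz : deriv I z = ((2 / Real.sqrt π) * Real.exp (-(I z)^2))⁻¹ :=
    (hIderiv z hz).deriv
  have hFz := hFG z hz
  simp only [hFdef, hGdef] at hFz
  rw [hFz, hdz]
  have hexp : Real.exp (-(I z)^2) ≠ 0 := (Real.exp_pos _).ne'
  field_simp
  ring
end

section
/- The Taylor coefficients dₙ = (dⁿ/dzⁿ inverf)(0) satisfy the nonlinear recurrence d_{n+1} = √π · Σ_{k=0}^{n-1} C(n, k+1) · d_k · d_{n-k} for all n ≥ 1, with d₀ = 0 and d₁ = √π/2. -/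
open Real Set Filter Topology
open scoped ContDiff

private lemma itdw_eq {n : ℕ} {f : ℝ → ℝ} {s : Set ℝ} (hs : IsOpen s) {x : ℝ} (hx : x ∈ s) :
    iteratedDerivWithin n f s x = iteratedDeriv n f x := by
  rw [iteratedDerivWithin_eq_iteratedFDerivWithin, iteratedDeriv_eq_iteratedFDeriv,
    iteratedFDerivWithin_of_isOpen n hs hx]

private lemma leibniz_aux {s : Set ℝ} (hs : IsOpen s) :
    ∀ n : ℕ, ∀ f g : ℝ → ℝ, ContDiffOn ℝ n f s → ContDiffOn ℝ n g s → ∀ x ∈ s,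
      iteratedDeriv n (fun y => f y * g y) x =
        ∑ j ∈ Finset.range (n + 1),
          (n.choose j : ℝ) * iteratedDeriv j f x * iteratedDeriv (n - j) g x := by
  intro n
  induction n with
  | zero => intro f g _ _ x _; simp
  | succ n IH =>
    intro f g hf hg x hx
    have h1n : (1 : WithTop ℕ∞) ≤ ((n + 1 : ℕ) : WithTop ℕ∞) := by
      exact_mod_cast Nat.le_add_left 1 n
    have hnn : ((n : ℕ) : WithTop ℕ∞) ≤ ((n + 1 : ℕ) : WithTop ℕ∞) := by
      exact_mod_cast Nat.le_succ n
    have hfd : DifferentiableOn ℝ f s := hf.differentiableOn (by simp)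
    have hgd : DifferentiableOn ℝ g s := hg.differentiableOn (by simp)
    have hf' : ContDiffOn ℝ n (deriv f) s :=
      hf.deriv_of_isOpen hs (by exact_mod_cast le_refl (n + 1))
    have hg' : ContDiffOn ℝ n (deriv g) s :=
      hg.deriv_of_isOpen hs (by exact_mod_cast le_refl (n + 1))
    have hA : ContDiffOn ℝ n (fun y => deriv f y * g y) s := hf'.mul (hg.of_le hnn)
    have hB : ContDiffOn ℝ n (fun y => f y * deriv g y) s := (hf.of_le hnn).mul hg'
    have hstep : iteratedDeriv (n + 1) (fun y => f y * g y) x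
        = iteratedDeriv n (fun y => deriv f y * g y) x
          + iteratedDeriv n (fun y => f y * deriv g y) x := by
      rw [iteratedDeriv_succ']
      have hev : (deriv fun y => f y * g y)
          =ᶠ[𝓝 x] fun y => deriv f y * g y + f y * deriv g y := by
        filter_upwards [hs.mem_nhds hx] with y hy
        exact deriv_mul (hfd.differentiableAt (hs.mem_nhds hy))
          (hgd.differentiableAt (hs.mem_nhds hy))
      rw [hev.iteratedDeriv_eq n, ← itdw_eq hs hx]
      have heq : (fun y => deriv f y * g y + f y * deriv g y)
          = (fun y => deriv f y * g y) + (fun y => f y * deriv g y) := rfl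
      rw [heq, iteratedDerivWithin_add hx hs.uniqueDiffOn (hA x hx) (hB x hx), itdw_eq hs hx, itdw_eq hs hx]
    rw [hstep, IH _ _ hf' (hg.of_le hnn) x hx, IH _ _ (hf.of_le hnn) hg' x hx]
    have ra : ∀ j : ℕ, iteratedDeriv j (deriv f) x = iteratedDeriv (j + 1) f x := fun j => by
      rw [iteratedDeriv_succ']
    have rb : ∀ j : ℕ, iteratedDeriv j (deriv g) x = iteratedDeriv (j + 1) g x := fun j => by
      rw [iteratedDeriv_succ']
    simp only [ra, rb]
    -- pure algebra now
    set a : ℕ → ℝ := fun j => iteratedDeriv j f x with ha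
    set b : ℕ → ℝ := fun j => iteratedDeriv j g x with hb
    rw [Finset.sum_range_succ' (fun j => ((n + 1).choose j : ℝ) * a j * b (n + 1 - j)) (n + 1),
        Finset.sum_range_succ' (fun j => (n.choose j : ℝ) * a j * b (n - j + 1)) n]
    have e1 : ∀ i ∈ Finset.range (n + 1),
        (((n + 1).choose (i + 1) : ℝ)) * a (i + 1) * b (n + 1 - (i + 1))
          = (n.choose i : ℝ) * a (i + 1) * b (n - i)
            + (n.choose (i + 1) : ℝ) * a (i + 1) * b (n - i) := by
      intro i _
      have h2 : n + 1 - (i + 1) = n - i := by omega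
      rw [h2, Nat.choose_succ_succ, Nat.cast_add]; ring
    rw [Finset.sum_congr rfl e1, Finset.sum_add_distrib]
    have e2 : ∀ i ∈ Finset.range n,
        (n.choose (i + 1) : ℝ) * a (i + 1) * b (n - (i + 1) + 1)
          = (n.choose (i + 1) : ℝ) * a (i + 1) * b (n - i) := by
      intro i hi
      simp only [Finset.mem_range] at hi
      have h3 : n - (i + 1) + 1 = n - i := by omega
      rw [h3]
    rw [Finset.sum_congr rfl e2]
    have e3 : ∑ i ∈ Finset.range (n + 1), (n.choose (i + 1) : ℝ) * a (i + 1) * b (n - i)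
        = ∑ i ∈ Finset.range n, (n.choose (i + 1) : ℝ) * a (i + 1) * b (n - i) := by
      rw [Finset.sum_range_succ]
      simp
    rw [e3]
    simp [Nat.sub_zero]
    ring

theorem inverf_deriv_recurrence (I : ℝ → ℝ)
    (hleft : ∀ z ∈ Ioo (-1:ℝ) 1, erf (I z) = z)
    (hright : ∀ x : ℝ, I (erf x) = x)
    (d : ℕ → ℝ) (hd : ∀ n, d n = iteratedDeriv n I 0) :
    d 0 = 0 ∧ d 1 = Real.sqrt π / 2 ∧
    ∀ n : ℕ, 1 ≤ n →
      d (n+1) = Real.sqrt π * ∑ k ∈ Finset.range n, (n.choose (k+1) : ℝ) * d k * d (n-k) := by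
  have hπ : Real.sqrt π ≠ 0 := (Real.sqrt_pos.2 Real.pi_pos).ne'
  have hcont : Continuous fun t : ℝ => Real.exp (-t^2) := by fun_prop
  have hFd : ∀ x : ℝ, HasStrictDerivAt (fun z => ∫ t in (0:ℝ)..z, Real.exp (-t^2))
      (Real.exp (-x^2)) x := fun x => hcont.integral_hasStrictDerivAt 0 x
  have herf_d : ∀ x : ℝ, HasDerivAt erf (2 / Real.sqrt π * Real.exp (-x^2)) x := fun x => by
    unfold erf
    exact (hFd x).hasDerivAt.const_mul _
  have herf0 : erf 0 = 0 := by simp [erf]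
  have hF_cd : ContDiff ℝ ∞ (fun z => ∫ t in (0:ℝ)..z, Real.exp (-t^2)) := by
    rw [contDiff_infty_iff_deriv]
    constructor
    · exact fun x => ((hFd x).hasDerivAt).differentiableAt
    · have hdF : deriv (fun z => ∫ t in (0:ℝ)..z, Real.exp (-t^2))
          = fun x => Real.exp (-x^2) := by
        funext x; exact ((hFd x).hasDerivAt).deriv
      rw [hdF]
      exact Real.contDiff_exp.comp ((contDiff_id.pow 2).neg)
  have herf_cd : ContDiffAt ℝ ∞ erf 0 := by
    have h : ContDiff ℝ ∞ erf := contDiff_const.mul hF_cd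
    exact h.contDiffAt
  have hc0 : (2 / Real.sqrt π * Real.exp (-(0:ℝ)^2)) ≠ 0 := by
    have h1 : (0:ℝ) < Real.sqrt π := Real.sqrt_pos.2 Real.pi_pos
    positivity
  have hone : (∞ : WithTop ℕ∞) ≠ 0 := by simp
  have hfd' : HasFDerivAt erf
      (ContinuousLinearEquiv.unitsEquivAut ℝ (Units.mk0 _ hc0) : ℝ →L[ℝ] ℝ) 0 :=
    (herf_d 0).hasFDerivAt_equiv hc0
  have hsf := herf_cd.hasStrictFDerivAt' hfd' hone
  have hIg : I =ᶠ[𝓝 (0:ℝ)]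
      hsf.localInverse erf (ContinuousLinearEquiv.unitsEquivAut ℝ (Units.mk0 _ hc0)) 0 := by
    have h := hsf.localInverse_unique (g := I) (Filter.Eventually.of_forall fun x => hright x)
    rwa [herf0] at h
  have hg_cd : ContDiffAt ℝ ∞
      (hsf.localInverse erf (ContinuousLinearEquiv.unitsEquivAut ℝ (Units.mk0 _ hc0)) 0) 0 := by
    have h := herf_cd.to_localInverse hfd' hone
    rw [herf0] at h
    exact h
  have hI_cd : ContDiffAt ℝ ∞ I 0 := hg_cd.congr_of_eventuallyEq hIg
  have hI0 : I 0 = 0 := by have h := hright 0; rwa [herf0] at h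
  have h01 : (0:ℝ) ∈ Ioo (-1:ℝ) 1 := by norm_num
  -- key derivative identity
  have F2 : ∀ y : ℝ, y ∈ Ioo (-1:ℝ) 1 → DifferentiableAt ℝ I y →
      Real.exp (-(I y)^2) * deriv I y = Real.sqrt π / 2 := by
    intro y hy hdiff
    have h1 : HasDerivAt (fun z => erf (I z))
        ((2 / Real.sqrt π * Real.exp (-(I y)^2)) * deriv I y) y :=
      (herf_d (I y)).comp y hdiff.hasDerivAt
    have h2 : HasDerivAt (fun z => erf (I z)) 1 y := by
      have hev : (fun z => erf (I z)) =ᶠ[𝓝 y] id := by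
        filter_upwards [isOpen_Ioo.mem_nhds hy] with z hz
        exact hleft z hz
      exact (hasDerivAt_id y).congr_of_eventuallyEq hev
    have h3 := h1.unique h2
    field_simp at h3 ⊢
    linarith
  refine ⟨by rw [hd 0, iteratedDeriv_zero, hI0], ?_, ?_⟩
  · have hdI0 : DifferentiableAt ℝ I 0 := hI_cd.differentiableAt hone
    have key1 := F2 0 h01 hdI0
    rw [hI0] at key1
    norm_num at key1
    rw [hd 1, iteratedDeriv_one, key1]
  · intro n hn
    have hm : ContDiffAt ℝ ((n + 2 : ℕ) : WithTop ℕ∞) I 0 := hI_cd.of_le (ENat.natCast_le_of_coe_top_le_withTop le_rfl (n + 2))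
    obtain ⟨U0, hU0nhds, hU0⟩ := hm.contDiffOn le_rfl (fun h => absurd h (by exact_mod_cast ENat.natCast_ne_coe_top (n + 2)))
    set U : Set ℝ := interior U0 ∩ Ioo (-1) 1 with hUdef
    have hUopen : IsOpen U := isOpen_interior.inter isOpen_Ioo
    have h0U : (0:ℝ) ∈ U := ⟨mem_interior_iff_mem_nhds.2 hU0nhds, h01⟩
    have hI' : ContDiffOn ℝ ((n + 2 : ℕ) : WithTop ℕ∞) I U :=
      hU0.mono (fun y hy => interior_subset hy.1)
    have hUsub : U ⊆ Ioo (-1:ℝ) 1 := fun y hy => hy.2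
    have hdiffU : ∀ y ∈ U, DifferentiableAt ℝ I y := fun y hy =>
      (hI'.differentiableOn (by simp)).differentiableAt
        (hUopen.mem_nhds hy)
    have F2U : ∀ y ∈ U, Real.exp (-(I y)^2) * deriv I y = Real.sqrt π / 2 := fun y hy =>
      F2 y (hUsub hy) (hdiffU y hy)
    set u : ℝ → ℝ := fun y => (1 - Real.exp (-(I y)^2)) / Real.sqrt π with hu_def
    have hu0 : u 0 = 0 := by simp [hu_def, hI0]
    have F3 : ∀ y ∈ U, HasDerivAt u (I y) y := by
      intro y hy
      have hIy := (hdiffU y hy).hasDerivAt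
      have hpow : HasDerivAt (fun z => -(I z)^2)
          (-((2:ℕ) * I y ^ 1 * deriv I y)) y := (hIy.pow 2).neg
      have hexp : HasDerivAt (fun z => Real.exp (-(I z)^2))
          (Real.exp (-(I y)^2) * -((2:ℕ) * I y ^ 1 * deriv I y)) y := hpow.exp
      have hsub : HasDerivAt (fun z => 1 - Real.exp (-(I z)^2))
          (-(Real.exp (-(I y)^2) * -((2:ℕ) * I y ^ 1 * deriv I y))) y := hexp.const_sub 1
      have hdiv := hsub.div_const (Real.sqrt π)
      refine hdiv.congr_deriv ?_
      have h2 := F2U y hy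
      rw [pow_one, div_eq_iff hπ]
      linear_combination (2 * I y) * h2
    have hderivu : Set.EqOn (deriv u) I U := fun y hy => (F3 y hy).deriv
    have F4 : Set.EqOn (deriv I)
        (fun y => Real.sqrt π / 2 + Real.sqrt π * (u y * deriv I y)) U := by
      intro y hy
      have h2 := F2U y hy
      simp only [hu_def]
      have h3 : Real.sqrt π * ((1 - Real.exp (-(I y)^2)) / Real.sqrt π * deriv I y)
          = (1 - Real.exp (-(I y)^2)) * deriv I y := by
        field_simp
      rw [h3]
      linear_combination h2
    have hh : ContDiffOn ℝ n (deriv I) U :=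
      hI'.deriv_of_isOpen hUopen (by exact_mod_cast (by omega : n + 1 ≤ n + 2))
    have hIn : ContDiffOn ℝ n I U := hI'.of_le (by exact_mod_cast (by omega : n ≤ n + 2))
    have hun : ContDiffOn ℝ n u U := by
      have hexp : ContDiffOn ℝ n (fun y => Real.exp (-(I y)^2)) U :=
        Real.contDiff_exp.comp_contDiffOn ((hIn.pow 2).neg)
      exact (contDiffOn_const.sub hexp).div_const _
    have hmul : ContDiffOn ℝ n (fun y => u y * deriv I y) U := hun.mul hh
    have hu_it : ∀ k : ℕ, iteratedDeriv (k + 1) u 0 = d k := by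
      intro k
      rw [iteratedDeriv_succ']
      have hev : deriv u =ᶠ[𝓝 (0:ℝ)] I :=
        eventually_of_mem (hUopen.mem_nhds h0U) hderivu
      rw [hev.iteratedDeriv_eq k, hd k]
    have hh_it : ∀ m : ℕ, iteratedDeriv m (deriv I) 0 = d (m + 1) := fun m => by
      rw [← iteratedDeriv_succ', hd (m + 1)]
    rw [hd (n + 1), iteratedDeriv_succ', ← itdw_eq hUopen h0U,
        iteratedDerivWithin_congr F4 h0U,
        iteratedDerivWithin_const_add hn (Real.sqrt π / 2),
        iteratedDerivWithin_const_mul h0U hUopen.uniqueDiffOn (Real.sqrt π) (hmul 0 h0U),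
        itdw_eq hUopen h0U,
        leibniz_aux hUopen n u (deriv I) hun hh 0 h0U]
    congr 1
    rw [Finset.sum_range_succ'
      (fun j => (n.choose j : ℝ) * iteratedDeriv j u 0 * iteratedDeriv (n - j) (deriv I) 0) n]
    have hzero : (n.choose 0 : ℝ) * iteratedDeriv 0 u 0 * iteratedDeriv (n - 0) (deriv I) 0 = 0 := by
      rw [iteratedDeriv_zero, hu0]; ring
    rw [hzero, add_zero]
    refine Finset.sum_congr rfl ?_
    intro k hk
    simp only [Finset.mem_range] at hk
    rw [hu_it k, hh_it (n - (k + 1))]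
    have hidx : n - (k + 1) + 1 = n - k := by omega
    rw [hidx]
end

section
/- The coefficient C₁ⁿ of x^{n-2} in Pₙ satisfies C₁ⁿ = n!·Σ_{j=0}^{n-1} j/(j+1) for all n ≥ 2. -/
open Polynomial

theorem P_subleading_coeff (P : ℕ → Polynomial ℝ)
    (hP0 : P 0 = 1)
    (hP : ∀ n : ℕ, P (n+1) = derivative (P n) + C ((n:ℝ)+1) * X * P n) :
    ∀ n : ℕ, 2 ≤ n →
      (P n).coeff (n-2) = (n.factorial : ℝ) * ∑ j ∈ Finset.range n, (j : ℝ) / (j+1) := by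
  -- degree bound
  have hdeg : ∀ n, (P n).natDegree ≤ n := by
    intro n
    induction n with
    | zero => simp [hP0]
    | succ n ih =>
      rw [hP n]
      refine le_trans (natDegree_add_le _ _) ?_
      refine max_le (le_trans (natDegree_derivative_le _) (by omega)) ?_
      refine le_trans (natDegree_mul_le) ?_
      have h1 : (C ((n:ℝ)+1) * X).natDegree ≤ 1 :=
        le_trans (natDegree_C_mul_le _ _) natDegree_X_le
      omega
  have hcoeff_high : ∀ n k, n < k → (P n).coeff k = 0 := by
    intro n k hk
    exact coeff_eq_zero_of_natDegree_lt (lt_of_le_of_lt (hdeg n) hk)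
  -- leading coefficient
  have hlead : ∀ n, (P n).coeff n = n.factorial := by
    intro n
    induction n with
    | zero => simp [hP0]
    | succ n ih =>
      rw [hP n, coeff_add, coeff_derivative, mul_assoc, coeff_C_mul, coeff_X_mul,
        hcoeff_high n (n+1+1) (by omega), ih]
      push_cast [Nat.factorial_succ]
      ring
  -- main induction, shifted
  have main : ∀ m : ℕ, (P (m+2)).coeff m =
      ((m+2).factorial : ℝ) * ∑ j ∈ Finset.range (m+2), (j : ℝ) / (j+1) := by
    intro m
    induction m with
    | zero =>
      have h1 : P 1 = X := by rw [hP 0, hP0]; simp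
      rw [hP 1, h1]
      simp [Finset.sum_range_succ]
      norm_num
    | succ m ih =>
      have : m + 1 + 2 = (m + 2) + 1 := by ring
      rw [this, hP (m+2), coeff_add, coeff_derivative, mul_assoc, coeff_C_mul,
        coeff_X_mul, hlead (m+2), ih]
      rw [Finset.sum_range_succ ((fun j => (j:ℝ)/(j+1))) (m+2)]
      have hfac : ((m+3).factorial : ℝ) = ((m+3):ℝ) * ((m+2).factorial : ℝ) := by
        push_cast [Nat.factorial_succ]; ring
      have hne : ((m:ℝ)+2+1) ≠ 0 := by positivity
      push_cast [Nat.factorial_succ]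
      field_simp
      ring
  intro n hn
  obtain ⟨m, rfl⟩ : ∃ m, n = m + 2 := ⟨n - 2, by omega⟩
  simpa using main m
end

section
/- For n ≥ 1, every complex zero of the polynomial Pₙ is purely imaginary: if Pₙ(z) = 0 for z ∈ ℂ, then Re(z) = 0. -/
open Polynomial

private lemma logderiv_aux (s : Multiset ℂ) :
    ∀ z : ℂ, z.re ≠ 0 → (∀ w ∈ s, w.re = 0) →
      eval z ((s.map (fun w => X - C w)).prod) ≠ 0 ∧
      ∃ S : ℝ, 0 ≤ S ∧
        ((eval z (derivative ((s.map (fun w => X - C w)).prod))) /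
          (eval z ((s.map (fun w => X - C w)).prod))).re = z.re * S := by
  induction s using Multiset.induction_on with
  | empty =>
    intro z hz _
    refine ⟨by simp, 0, le_rfl, by simp⟩
  | cons w t ih =>
    intro z hz hmem
    obtain ⟨h1, S, hS, hre⟩ := ih z hz (fun x hx => hmem x (Multiset.mem_cons_of_mem hx))
    have hw : w.re = 0 := hmem w (Multiset.mem_cons_self w t)
    set r := (t.map (fun w => X - C w)).prod with hr
    have hzw : (z - w) ≠ 0 := by
      intro h
      apply hz
      have := congrArg Complex.re h
      simp [hw] at this
      simpa [hw] using this
    have hq : ((w ::ₘ t).map (fun w => X - C w)).prod = (X - C w) * r := by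
      rw [Multiset.map_cons, Multiset.prod_cons]
    rw [hq]
    have heval : eval z ((X - C w) * r) = (z - w) * eval z r := by simp
    constructor
    · rw [heval]; exact mul_ne_zero hzw h1
    · have hd : derivative ((X - C w) * r) = r + (X - C w) * derivative r := by
        rw [derivative_mul]; simp
      have key : eval z (derivative ((X - C w) * r)) / eval z ((X - C w) * r)
          = (z - w)⁻¹ + eval z (derivative r) / eval z r := by
        rw [hd, heval]
        simp only [eval_add, eval_mul, eval_sub, eval_X, eval_C]
        field_simp
      refine ⟨(Complex.normSq (z - w))⁻¹ + S, add_nonneg (inv_nonneg.2 (Complex.normSq_nonneg _)) hS, ?_⟩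
      rw [key]
      have : ((z - w)⁻¹).re = z.re * (Complex.normSq (z - w))⁻¹ := by
        rw [Complex.inv_re]
        simp [hw, div_eq_mul_inv]
      rw [Complex.add_re, this, hre]
      ring

theorem P_zeros_purely_imaginary (P : ℕ → Polynomial ℂ)
    (hP0 : P 0 = 1)
    (hP : ∀ n : ℕ, P (n+1) = derivative (P n) + C ((n:ℂ)+1) * X * P n) :
    ∀ n : ℕ, 1 ≤ n → ∀ z : ℂ, (P n).eval z = 0 → z.re = 0 := by
  have main : ∀ n : ℕ, ∀ z : ℂ, z.re ≠ 0 → (P n).eval z ≠ 0 := by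
    intro n
    induction n with
    | zero => intro z hz; simp [hP0]
    | succ n ih =>
      intro z hz hcontra
      -- P n ≠ 0 as a polynomial
      have hPn0 : P n ≠ 0 := by
        intro h
        exact ih 1 (by norm_num) (by simp [h])
      -- roots of P n are purely imaginary
      have hroots : ∀ w ∈ (P n).roots, w.re = 0 := by
        intro w hw
        by_contra hwre
        exact ih w hwre ((isRoot_of_mem_roots hw))
      -- factorization
      have hsplit : (P n).Splits := IsAlgClosed.splits _
      have hfac := hsplit.eq_prod_roots
      set a := (P n).leadingCoeff with ha
      have ha0 : a ≠ 0 := leadingCoeff_ne_zero.2 hPn0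
      set q := ((P n).roots.map (fun w => X - C w)).prod with hq
      obtain ⟨hq0, S, hS, hre⟩ := logderiv_aux (P n).roots z hz hroots
      have hPnz : (P n).eval z = a * eval z q := by rw [hfac]; simp
      have hPnz0 : (P n).eval z ≠ 0 := ih z hz
      have hqz0 : eval z q ≠ 0 := hq0
      -- derivative
      have hdPn : eval z (derivative (P n)) = a * eval z (derivative q) := by
        rw [hfac, derivative_mul]; simp
      -- recurrence at z
      have heq : eval z (derivative (P n)) + ((n : ℂ) + 1) * z * (P n).eval z = 0 := by
        have := congrArg (eval z) (hP n)
        simp only [eval_add, eval_mul, eval_C, eval_X] at this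
        rw [← this]; exact hcontra
      -- divide
      have hdiv : eval z (derivative q) / eval z q = -(((n : ℂ) + 1) * z) := by
        rw [hdPn, hPnz] at heq
        have h' : a * (eval z (derivative q) + ((n:ℂ)+1) * z * eval z q) = 0 := by
          linear_combination heq
        have h2 : eval z (derivative q) + ((n:ℂ)+1) * z * eval z q = 0 :=
          (mul_eq_zero.1 h').resolve_left ha0
        have hD : eval z (derivative q) = -(((n:ℂ)+1) * z) * eval z q := by
          linear_combination h2
        rw [hD, mul_div_assoc, div_self hqz0, mul_one]
      rw [hdiv] at hre
      have : z.re * (S + ((n:ℝ) + 1)) = 0 := by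
        have h2 : (-(((n : ℂ) + 1) * z)).re = -((n:ℝ)+1) * z.re := by
          simp [Complex.mul_re]
          ring
        rw [h2] at hre
        linarith [hre]
      have hpos : S + ((n:ℝ) + 1) > 0 := by positivity
      exact hz (by
        rcases mul_eq_zero.1 this with h | h
        · exact h
        · exact absurd h (ne_of_gt hpos))
  intro n _ z hz
  by_contra hre
  exact main n z hre hz
end

section
/- All coefficients of the polynomials Pₙ are nonnegative integers; more precisely, writing Pₙ(x) = Σ_{0 ≤ 2k ≤ n} C_kⁿ·x^{n-2k}, each C_kⁿ is a nonnegative integer. -/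
open Polynomial

theorem P_coeffs_nonneg_integers (P : ℕ → Polynomial ℝ)
    (hP0 : P 0 = 1)
    (hP : ∀ n : ℕ, P (n+1) = derivative (P n) + C ((n:ℝ)+1) * X * P n) :
    ∀ n k : ℕ, 2*k ≤ n → ∃ m : ℕ, (P n).coeff (n - 2*k) = (m : ℝ) := by
  have key : ∀ n j : ℕ, ∃ m : ℕ, (P n).coeff j = (m : ℝ) := by
    intro n
    induction n with
    | zero =>
      intro j
      rw [hP0, Polynomial.coeff_one]
      by_cases h : j = 0
      · exact ⟨1, by simp [h]⟩
      · exact ⟨0, by simp [h]⟩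
    | succ n ih =>
      intro j
      obtain ⟨a, ha⟩ := ih (j + 1)
      rw [hP n, coeff_add, coeff_derivative]
      cases j with
      | zero =>
        refine ⟨a * 1, ?_⟩
        have : (C ((n:ℝ)+1) * X * P n).coeff 0 = 0 := by
          simp [mul_assoc, coeff_C_mul, coeff_X_mul]
        rw [this, ha]
        push_cast
        ring
      | succ j =>
        obtain ⟨b, hb⟩ := ih j
        refine ⟨a * (j + 2) + (n + 1) * b, ?_⟩
        have : (C ((n:ℝ)+1) * X * P n).coeff (j+1) = ((n:ℝ)+1) * (P n).coeff j := by
          rw [mul_assoc, coeff_C_mul, coeff_X_mul]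
        rw [this, ha, hb]
        push_cast
        ring
  intro n k _
  exact key n (n - 2*k)
end
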